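/- Let μ ≥ 0, D > 0, and let {(x_i, g_i, f_i)}_{i∈I} be a finite set of triples in E × E × ℝ satisfying f_i − f_j − ⟨g_j, x_i − x_j⟩ ≥ (μ/2)‖x_i − x_j‖² and ‖x_i − x_j‖ ≤ D for all i, j ∈ I. Then there exists a μ-strongly convex proper closed function F whose effective domain has diameter at most D, with F(x_i) = f_i and g_i ∈ ∂F(x_i) for all i ∈ I. -/

import Mathlib

variable {E : Type*} [NormedAddCommGroup E] [InnerProductSpace ℝ E] [FiniteDimensional ℝ E]

/-- `f` is a proper, closed (lower semicontinuous) convex extended-real-valued function. -/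
def IsProperClosedConvex (f : E → EReal) : Prop :=
  (∃ x, f x ≠ ⊤) ∧ (∀ x, f x ≠ ⊥) ∧ LowerSemicontinuous f ∧
    ∀ x y : E, ∀ t : ℝ, 0 ≤ t → t ≤ 1 →
      f (t • x + (1 - t) • y) ≤ (t : EReal) * f x + ((1 - t : ℝ) : EReal) * f y

/-- `g` is a subgradient of `f` at `x`. -/
def IsSubgradientAt (f : E → EReal) (x g : E) : Prop :=
  ∀ y, f x + ((inner ℝ g (y - x) : ℝ) : EReal) ≤ f y

/-- `f` is `μ`-strongly convex (i.e. `f - μ/2‖·‖²` is convex). -/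
def IsStronglyConvexWith (μ : ℝ) (f : E → EReal) : Prop :=
  ∀ x y : E, ∀ t : ℝ, 0 ≤ t → t ≤ 1 →
    f (t • x + (1 - t) • y) ≤
      (t : EReal) * f x + ((1 - t : ℝ) : EReal) * f y -
        ((μ / 2 * (t * (1 - t)) * ‖x - y‖ ^ 2 : ℝ) : EReal)

open Topology Set
open scoped InnerProductSpace

/-!
Take the pointwise maximum of the quadratic models
`q i z = f i + ⟪g i, z - x i⟫ + μ/2 ‖z - x i‖²` on the convex hull of the `x i`, and `+∞`
outside. Each `q i` is `μ`-strongly convex, hence so is their maximum; the interpolation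
inequalities say exactly that `q j (x i) ≤ f i = q i (x i)`, so the maximum equals `f i` at `x i`,
and it dominates `q i ≥ f i + ⟪g i, · - x i⟫`, which makes `g i` a subgradient there. The
effective domain is the convex hull, whose diameter is that of the points `x i`.
-/

lemma UniformConvexOn.sup {V : Type*} [NormedAddCommGroup V] [NormedSpace ℝ V] {s : Set V}
    {φ : ℝ → ℝ} {f g : V → ℝ} (hf : UniformConvexOn s φ f) (hg : UniformConvexOn s φ g) :
    UniformConvexOn s φ (f ⊔ g) := by
  refine ⟨hf.1, fun x hx y hy a b ha hb hab => sup_le ?_ ?_⟩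
  · refine (hf.2 hx hy ha hb hab).trans ?_
    simp only [Pi.sup_apply, smul_eq_mul]
    gcongr <;> simp
  · refine (hg.2 hx hy ha hb hab).trans ?_
    simp only [Pi.sup_apply, smul_eq_mul]
    gcongr <;> simp

lemma UniformConvexOn.finset_sup' {V ι : Type*} [NormedAddCommGroup V] [NormedSpace ℝ V]
    {s : Set V} {φ : ℝ → ℝ} {t : Finset ι} (ht : t.Nonempty) {f : ι → V → ℝ}
    (hf : ∀ i ∈ t, UniformConvexOn s φ (f i)) : UniformConvexOn s φ (t.sup' ht f) :=
  Finset.sup'_induction ht f (fun _ h₁ _ h₂ => h₁.sup h₂) hf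

lemma EReal.coe_mul_ne_bot {t : ℝ} (ht : 0 < t) {q : EReal} (hq : q ≠ ⊥) :
    (t : EReal) * q ≠ ⊥ := by
  simp [EReal.mul_ne_bot, hq, ht.le]

section ExtendByTop

variable {α : Type*} {C : Set α} {G : α → ℝ}

open Classical in
noncomputable def extendByTop (C : Set α) (G : α → ℝ) (z : α) : EReal :=
  if z ∈ C then (G z : EReal) else ⊤

lemma extendByTop_of_mem {z : α} (hz : z ∈ C) : extendByTop C G z = G z := if_pos hz

lemma extendByTop_of_notMem {z : α} (hz : z ∉ C) : extendByTop C G z = ⊤ := if_neg hz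

lemma mem_of_extendByTop_ne_top {z : α} (hz : extendByTop C G z ≠ ⊤) : z ∈ C :=
  not_not.1 fun h => hz (extendByTop_of_notMem h)

lemma extendByTop_ne_bot (z : α) : extendByTop C G z ≠ ⊥ := by
  by_cases hz : z ∈ C
  · simp [extendByTop_of_mem hz]
  · simp [extendByTop_of_notMem hz]

lemma coe_le_extendByTop (z : α) : (G z : EReal) ≤ extendByTop C G z := by
  by_cases hz : z ∈ C
  · rw [extendByTop_of_mem hz]
  · simp [extendByTop_of_notMem hz]

lemma lowerSemicontinuous_extendByTop [TopologicalSpace α] (hC : IsClosed C)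
    (hG : ContinuousOn G C) : LowerSemicontinuous (extendByTop C G) := by
  intro z y hy
  by_cases hz : z ∈ C
  · rw [extendByTop_of_mem hz] at hy
    have hGz : ∀ᶠ w in 𝓝[C] z, y < (G w : EReal) :=
      (continuous_coe_real_ereal.continuousAt.comp_continuousWithinAt
        (hG z hz)).eventually_const_lt hy
    filter_upwards [eventually_nhdsWithin_iff.1 hGz] with w hw
    by_cases hwC : w ∈ C
    · exact (hw hwC).trans_le (coe_le_extendByTop w)
    · rw [extendByTop_of_notMem hwC]
      exact hy.trans (EReal.coe_lt_top _)
  · filter_upwards [hC.isOpen_compl.mem_nhds hz] with w hw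
    rw [extendByTop_of_notMem hw]
    exact hy.trans_le le_top

lemma dist_le_of_extendByTop_ne_top [PseudoMetricSpace α] {D : ℝ} (hC : Bornology.IsBounded C)
    (hD : Metric.diam C ≤ D) {y z : α} (hy : extendByTop C G y ≠ ⊤)
    (hz : extendByTop C G z ≠ ⊤) : dist y z ≤ D :=
  (Metric.dist_le_diam_of_mem hC (mem_of_extendByTop_ne_top hy)
    (mem_of_extendByTop_ne_top hz)).trans hD

end ExtendByTop

section StronglyConvexExtension
omit [FiniteDimensional ℝ E]

variable {C : Set E} {G : E → ℝ}

lemma isStronglyConvexWith_extendByTop {μ : ℝ} (hG : StrongConvexOn C μ G) :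
    IsStronglyConvexWith μ (extendByTop C G) := by
  intro a b t ht0 ht1
  rcases ht0.eq_or_lt with rfl | ht0
  · simp
  rcases ht1.eq_or_lt with rfl | ht1
  · simp
  have ht1' : 0 < 1 - t := sub_pos.2 ht1
  by_cases ha : a ∈ C
  · by_cases hb : b ∈ C
    · rw [extendByTop_of_mem ha, extendByTop_of_mem hb,
        extendByTop_of_mem (hG.1 ha hb ht0.le ht1'.le (add_sub_cancel t 1)),
        ← EReal.coe_mul, ← EReal.coe_mul, ← EReal.coe_add, ← EReal.coe_sub, EReal.coe_le_coe_iff]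
      convert hG.2 ha hb ht0.le ht1'.le (add_sub_cancel t 1) using 1
      simp only [smul_eq_mul]
      ring
    · rw [extendByTop_of_notMem hb, EReal.coe_mul_top_of_pos ht1',
        EReal.add_top_of_ne_bot (EReal.coe_mul_ne_bot ht0 (extendByTop_ne_bot a)),
        EReal.top_sub_coe]
      exact le_top
  · rw [extendByTop_of_notMem ha, EReal.coe_mul_top_of_pos ht0,
      EReal.top_add_of_ne_bot (EReal.coe_mul_ne_bot ht1' (extendByTop_ne_bot b)),
      EReal.top_sub_coe]
    exact le_top

lemma isProperClosedConvex_extendByTop {μ : ℝ} (hμ : 0 ≤ μ) (hC : IsClosed C)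
    (hne : C.Nonempty) (hGc : ContinuousOn G C) (hG : StrongConvexOn C μ G) :
    IsProperClosedConvex (extendByTop C G) := by
  obtain ⟨z, hz⟩ := hne
  refine ⟨⟨z, by simp [extendByTop_of_mem hz]⟩, extendByTop_ne_bot,
    lowerSemicontinuous_extendByTop hC hGc, fun a b t ht0 ht1 => ?_⟩
  simpa using isStronglyConvexWith_extendByTop (hG.mono hμ) a b t ht0 ht1

lemma isSubgradientAt_extendByTop {x g : E} (hx : x ∈ C)
    (hG : ∀ y ∈ C, G x + ⟪g, y - x⟫_ℝ ≤ G y) : IsSubgradientAt (extendByTop C G) x g := by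
  intro y
  by_cases hy : y ∈ C
  · rw [extendByTop_of_mem hx, extendByTop_of_mem hy, ← EReal.coe_add, EReal.coe_le_coe_iff]
    exact hG y hy
  · simp [extendByTop_of_notMem hy]

end StronglyConvexExtension

section QuadraticEnvelope
omit [FiniteDimensional ℝ E]

noncomputable def quadraticModel (μ : ℝ) (x₀ g₀ : E) (f₀ : ℝ) (z : E) : ℝ :=
  f₀ + ⟪g₀, z - x₀⟫_ℝ + μ / 2 * ‖z - x₀‖ ^ 2

lemma strongConvexOn_quadraticModel {s : Set E} (hs : Convex ℝ s) (μ : ℝ) (x₀ g₀ : E) (f₀ : ℝ) :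
    StrongConvexOn s μ (quadraticModel μ x₀ g₀ f₀) := by
  rw [strongConvexOn_iff_convex]
  have haffine : (fun z => quadraticModel μ x₀ g₀ f₀ z - μ / 2 * ‖z‖ ^ 2) =
      fun z => (f₀ - ⟪g₀, x₀⟫_ℝ + μ / 2 * ‖x₀‖ ^ 2) + innerₛₗ ℝ (g₀ - μ • x₀) z := by
    ext z
    simp only [quadraticModel, norm_sub_sq_real, inner_sub_left, inner_sub_right,
      real_inner_smul_left, innerₛₗ_apply_apply, real_inner_comm x₀ z]
    ring
  rw [haffine]
  exact (convexOn_const _ hs).add ((innerₛₗ ℝ _).convexOn hs)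

lemma continuous_quadraticModel (μ : ℝ) (x₀ g₀ : E) (f₀ : ℝ) :
    Continuous (quadraticModel μ x₀ g₀ f₀) := by
  unfold quadraticModel
  fun_prop

variable {ι : Type*} [Fintype ι] [Nonempty ι]

noncomputable def quadraticEnvelope (μ : ℝ) (x g : ι → E) (f : ι → ℝ) : E → ℝ :=
  Finset.univ.sup' Finset.univ_nonempty fun i => quadraticModel μ (x i) (g i) (f i)

variable {μ : ℝ} {x g : ι → E} {f : ι → ℝ}

lemma quadraticModel_le_quadraticEnvelope (i : ι) (z : E) :
    quadraticModel μ (x i) (g i) (f i) z ≤ quadraticEnvelope μ x g f z := by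
  rw [quadraticEnvelope, Finset.sup'_apply]
  exact Finset.le_sup' (fun j => quadraticModel μ (x j) (g j) (f j) z) (Finset.mem_univ i)

lemma strongConvexOn_quadraticEnvelope {s : Set E} (hs : Convex ℝ s) :
    StrongConvexOn s μ (quadraticEnvelope μ x g f) :=
  UniformConvexOn.finset_sup' _ fun i _ => strongConvexOn_quadraticModel hs μ (x i) (g i) (f i)

lemma continuous_quadraticEnvelope : Continuous (quadraticEnvelope μ x g f) :=
  Continuous.finset_sup' _ fun i _ => continuous_quadraticModel μ (x i) (g i) (f i)

lemma quadraticEnvelope_apply_self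
    (hineq : ∀ i j, μ / 2 * ‖x i - x j‖ ^ 2 ≤ f i - f j - ⟪g j, x i - x j⟫_ℝ) (i : ι) :
    quadraticEnvelope μ x g f (x i) = f i := by
  refine le_antisymm ?_ (by simpa [quadraticModel] using
    quadraticModel_le_quadraticEnvelope (μ := μ) (x := x) (g := g) (f := f) i (x i))
  rw [quadraticEnvelope, Finset.sup'_apply]
  refine Finset.sup'_le _ _ fun j _ => ?_
  have := hineq i j
  simp only [quadraticModel]
  linarith

lemma quadraticEnvelope_add_inner_le (hμ : 0 ≤ μ)
    (hineq : ∀ i j, μ / 2 * ‖x i - x j‖ ^ 2 ≤ f i - f j - ⟪g j, x i - x j⟫_ℝ) (i : ι) (y : E) :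
    quadraticEnvelope μ x g f (x i) + ⟪g i, y - x i⟫_ℝ ≤ quadraticEnvelope μ x g f y := by
  have hmodel := quadraticModel_le_quadraticEnvelope (μ := μ) (x := x) (g := g) (f := f) i y
  have hquad : 0 ≤ μ / 2 * ‖y - x i‖ ^ 2 := by positivity
  rw [quadraticEnvelope_apply_self hineq]
  rw [quadraticModel] at hmodel
  linarith

end QuadraticEnvelope

/-- Sufficiency of the strongly convex interpolation conditions with a bound `D` on the
diameter of the domain. -/
theorem stmt3 {ι : Type*} [Fintype ι] (μ D : ℝ) (hμ : 0 ≤ μ) (hD : 0 < D)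
    (x g : ι → E) (f : ι → ℝ)
    (hineq : ∀ i j, μ / 2 * ‖x i - x j‖ ^ 2 ≤ f i - f j - (inner ℝ (g j) (x i - x j) : ℝ))
    (hdiam : ∀ i j, ‖x i - x j‖ ≤ D) :
    ∃ F : E → EReal, IsProperClosedConvex F ∧ IsStronglyConvexWith μ F ∧
      (∀ y z, F y ≠ ⊤ → F z ≠ ⊤ → ‖y - z‖ ≤ D) ∧
      ∀ i, F (x i) = ((f i : ℝ) : EReal) ∧ IsSubgradientAt F (x i) (g i) := by
  rcases isEmpty_or_nonempty ι with hι | hι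
  · have hG : StrongConvexOn {(0 : E)} μ 0 :=
      ⟨convex_singleton 0, by rintro _ rfl _ rfl a b - - -; simp⟩
    refine ⟨extendByTop {0} 0, isProperClosedConvex_extendByTop hμ isClosed_singleton
      (singleton_nonempty 0) continuousOn_const hG, isStronglyConvexWith_extendByTop hG,
      fun y z hy hz => ?_, isEmptyElim⟩
    rw [← dist_eq_norm]
    exact dist_le_of_extendByTop_ne_top Bornology.isBounded_singleton (by simpa using hD.le) hy hz
  · set C := convexHull ℝ (range x)
    have hCcompact : IsCompact C := (finite_range x).isCompact_convexHull (𝕜 := ℝ)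
    have hxC : ∀ i, x i ∈ C := fun i => subset_convexHull ℝ _ (mem_range_self i)
    have hCdiam : Metric.diam C ≤ D := by
      rw [convexHull_diam]
      refine Metric.diam_le_of_forall_dist_le hD.le ?_
      rintro _ ⟨i, rfl⟩ _ ⟨j, rfl⟩
      exact (dist_eq_norm _ _).trans_le (hdiam i j)
    have hG := strongConvexOn_quadraticEnvelope (μ := μ) (x := x) (g := g) (f := f)
      (convex_convexHull ℝ (range x))
    refine ⟨extendByTop C (quadraticEnvelope μ x g f),
      isProperClosedConvex_extendByTop hμ hCcompact.isClosed ⟨_, hxC (Classical.arbitrary ι)⟩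
        continuous_quadraticEnvelope.continuousOn hG,
      isStronglyConvexWith_extendByTop hG, fun y z hy hz => ?_, fun i => ⟨?_, ?_⟩⟩
    · rw [← dist_eq_norm]
      exact dist_le_of_extendByTop_ne_top hCcompact.isBounded hCdiam hy hz
    · rw [extendByTop_of_mem (hxC i), quadraticEnvelope_apply_self hineq]
    · exact isSubgradientAt_extendByTop (hxC i)
        fun y _ => quadraticEnvelope_add_inner_le hμ hineq i y
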